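/- Under coordinate-wise L-smoothness and the conditional decoding error bound P[U_n^t ≠ Û_n^t | x^t] ≤ P_E with P_E < 1/2 (where U_n^t = sign(∂_n f(x^t))), the one-step expected decrease satisfies E[f(x^{t+1}) - f(x^t) | x^t] ≤ -δ·(1 - 2P_E)·‖∇f(x^t)‖_1 + (δ²/2)·‖L‖_1. -/

import Mathlib

open MeasureTheory Asymptotics

/-! Along the step `-δ U` the smoothness bound gives, pathwise,
`f (x - δ U) - f x ≤ -δ ‖G x‖₁ + δ² / 2 ‖L‖₁ + ∑ₙ 2 δ |G x n| 1{sign (G x n) ≠ U n}`,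
because `G x n * U n` equals `|G x n|` when the sign is decoded correctly and is at least
`-|G x n|` otherwise. Conditioning on `x`, the weights `2 δ |G x n|` are `σ(x)`-measurable and
pull out of the conditional expectation, leaving the conditional error probabilities, each at
most `P_E`. The weights are measurable because `G` is the Fréchet derivative of `f`. -/

theorem hasFDerivAt_of_abs_sub_sub_le_mul_sq {E : Type*} [NormedAddCommGroup E]
    [NormedSpace ℝ E] {f : E → ℝ} {φ : E →L[ℝ] ℝ} {x : E} (C : ℝ)
    (h : ∀ y, |f y - f x - φ (y - x)| ≤ C * ‖y - x‖ ^ 2) : HasFDerivAt f φ x := by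
  refine .of_isLittleO (IsBigO.trans_isLittleO ?_ (isLittleO_pow_sub_sub x one_lt_two))
  refine .of_bound C (.of_forall fun y => ?_)
  simpa [Real.norm_eq_abs, abs_of_nonneg (sq_nonneg ‖y - x‖)] using h y

theorem measurable_real_sign : Measurable Real.sign :=
  Measurable.ite measurableSet_Iio measurable_const
    (Measurable.ite measurableSet_Ioi measurable_const measurable_const)

theorem abs_le_mul_add_ite_of_sign {g u : ℝ} (hu : u = 1 ∨ u = -1) :
    |g| ≤ g * u + if Real.sign g ≠ u then 2 * |g| else 0 := by
  split_ifs with h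
  · rcases hu with rfl | rfl <;> cases abs_cases g <;> linarith
  · rcases lt_trichotomy g 0 with hg | rfl | hg
    · rw [Real.sign_of_neg hg] at h; rw [← not_not.mp h, abs_of_neg hg]; linarith
    · simp
    · rw [Real.sign_of_pos hg] at h; rw [← not_not.mp h, abs_of_pos hg]; linarith

def IsCoordwiseSmooth {ι : Type*} [Fintype ι] (f : (ι → ℝ) → ℝ) (G : (ι → ℝ) → ι → ℝ)
    (L : ι → ℝ) : Prop :=
  ∀ x y, |f y - f x - ∑ n, G x n * (y n - x n)| ≤ ∑ n, L n / 2 * (y n - x n) ^ 2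

namespace IsCoordwiseSmooth

variable {ι : Type*} [Fintype ι] {f : (ι → ℝ) → ℝ} {G : (ι → ℝ) → ι → ℝ} {L : ι → ℝ}

theorem hasFDerivAt (hf : IsCoordwiseSmooth f G L) (x : ι → ℝ) :
    HasFDerivAt f
      (∑ n, G x n • ContinuousLinearMap.proj (R := ℝ) (φ := fun _ : ι => ℝ) n) x := by
  refine hasFDerivAt_of_abs_sub_sub_le_mul_sq (∑ n, |L n| / 2) fun y => ?_
  have hcoord : ∀ n, L n / 2 * (y n - x n) ^ 2 ≤ |L n| / 2 * ‖y - x‖ ^ 2 := fun n => by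
    have hsq : (y n - x n) ^ 2 ≤ ‖y - x‖ ^ 2 := by
      have := pow_le_pow_left₀ (norm_nonneg _) (norm_le_pi_norm (y - x) n) 2
      rwa [Pi.sub_apply, Real.norm_eq_abs, sq_abs] at this
    exact mul_le_mul (by linarith [le_abs_self (L n)]) hsq (sq_nonneg _) (by positivity)
  simpa [Finset.sum_mul] using (hf x y).trans (Finset.sum_le_sum fun n _ => hcoord n)

theorem measurable_apply (hf : IsCoordwiseSmooth f G L) (n : ι) :
    Measurable fun v => G v n := by
  classical
  have hG : (fun v => G v n) = fun v => fderiv ℝ f v (Pi.single n 1) := by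
    ext v
    simp [(hasFDerivAt hf v).fderiv, Pi.single_apply]
  rw [hG]
  exact measurable_fderiv_apply_const ℝ f _

theorem sub_le_of_sign_step (hf : IsCoordwiseSmooth f G L) (x u : ι → ℝ)
    (hu : ∀ n, u n = 1 ∨ u n = -1) {δ : ℝ} (hδ : 0 ≤ δ) :
    f (fun n => x n - δ * u n) - f x ≤ -δ * ∑ n, |G x n| + δ ^ 2 / 2 * ∑ n, L n +
      ∑ n, if Real.sign (G x n) ≠ u n then 2 * δ * |G x n| else 0 := by
  have hlin : ∑ n, G x n * ((x n - δ * u n) - x n) ≤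
      ∑ n, (-δ * |G x n| + if Real.sign (G x n) ≠ u n then 2 * δ * |G x n| else 0) := by
    refine Finset.sum_le_sum fun n _ => ?_
    have h := mul_le_mul_of_nonneg_left (abs_le_mul_add_ite_of_sign (g := G x n) (hu n)) hδ
    rw [mul_add, mul_ite, mul_zero] at h
    split_ifs at h ⊢ <;> linarith
  have hquad : ∑ n, L n / 2 * ((x n - δ * u n) - x n) ^ 2 = δ ^ 2 / 2 * ∑ n, L n := by
    rw [Finset.mul_sum]
    refine Finset.sum_congr rfl fun n _ => ?_
    rcases hu n with h | h <;> rw [h] <;> ring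
  have hstep := (abs_le.mp (hf x fun n => x n - δ * u n)).2
  rw [Finset.sum_add_distrib, ← Finset.mul_sum] at hlin
  linarith

end IsCoordwiseSmooth

section ConditionalExpectation

variable {Ω : Type*} {m m0 : MeasurableSpace Ω} {μ : Measure Ω} [IsFiniteMeasure μ]

theorem condExp_indicator_le_mul {φ : Ω → ℝ} {A : Set Ω} {p : ℝ}
    (hφm : StronglyMeasurable[m] φ) (hφi : Integrable φ μ) (hφ0 : 0 ≤ φ)
    (hA : MeasurableSet A) (hP : μ[A.indicator (fun _ => (1 : ℝ)) | m] ≤ᵐ[μ] fun _ => p) :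
    μ[A.indicator φ | m] ≤ᵐ[μ] fun ω => p * φ ω := by
  have hmul : A.indicator φ = φ * A.indicator (fun _ => (1 : ℝ)) := by
    ext ω
    by_cases hω : ω ∈ A <;> simp [hω]
  have hpull := condExp_mul_of_stronglyMeasurable_left (μ := μ) hφm (hmul ▸ hφi.indicator hA)
    ((integrable_const (1 : ℝ)).indicator hA)
  rw [hmul]
  filter_upwards [hpull, hP] with ω hω hpω
  rw [hω, Pi.mul_apply, mul_comm p]
  exact mul_le_mul_of_nonneg_left hpω (hφ0 ω)

theorem condExp_le_of_le_add_sum_indicator (hm : m ≤ m0) {ι : Type*} [Fintype ι]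
    {F ψ : Ω → ℝ} {φ : ι → Ω → ℝ} {A : ι → Set Ω} {p : ℝ} (hF : Integrable F μ)
    (hψm : StronglyMeasurable[m] ψ) (hψi : Integrable ψ μ)
    (hφm : ∀ i, StronglyMeasurable[m] (φ i)) (hφi : ∀ i, Integrable (φ i) μ)
    (hφ0 : ∀ i, 0 ≤ φ i) (hA : ∀ i, MeasurableSet (A i))
    (hP : ∀ i, μ[(A i).indicator (fun _ => (1 : ℝ)) | m] ≤ᵐ[μ] fun _ => p)
    (hle : ∀ ω, F ω ≤ ψ ω + ∑ i, (A i).indicator (φ i) ω) :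
    μ[F | m] ≤ᵐ[μ] fun ω => ψ ω + p * ∑ i, φ i ω := by
  have hAi : ∀ i, Integrable ((A i).indicator (φ i)) μ := fun i => (hφi i).indicator (hA i)
  have hsumi : Integrable (∑ i, (A i).indicator (φ i)) μ :=
    integrable_finsetSum' _ fun i _ => hAi i
  have hmono : μ[F | m] ≤ᵐ[μ] μ[ψ + ∑ i, (A i).indicator (φ i) | m] :=
    condExp_mono hF (hψi.add hsumi) (ae_of_all _ fun ω => by simpa using hle ω)
  have hbound : ∀ᵐ ω ∂μ, ∀ i, μ[(A i).indicator (φ i) | m] ω ≤ p * φ i ω :=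
    ae_all_iff.2 fun i => condExp_indicator_le_mul (hφm i) (hφi i) (hφ0 i) (hA i) (hP i)
  filter_upwards [hmono, condExp_add hψi hsumi m,
    condExp_finsetSum (μ := μ) (m := m) (s := Finset.univ) fun i _ => hAi i, hbound]
    with ω hmonoω haddω hsumω hboundω
  rw [haddω, Pi.add_apply, condExp_of_stronglyMeasurable hm hψm hψi, hsumω,
    Finset.sum_apply] at hmonoω
  rw [Finset.mul_sum]
  exact hmonoω.trans (add_le_add_right (Finset.sum_le_sum fun i _ => hboundω i) _)

end ConditionalExpectation

theorem sign_descent_conditional_general {Ω : Type*} [MeasurableSpace Ω]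
    (μ : Measure Ω) [IsProbabilityMeasure μ] (N : ℕ)
    (f : (Fin N → ℝ) → ℝ) (G : (Fin N → ℝ) → (Fin N → ℝ))
    (L : Fin N → ℝ)
    (hsmooth : ∀ x y : Fin N → ℝ,
      |f y - f x - ∑ n, G x n * (y n - x n)| ≤ ∑ n, L n / 2 * (y n - x n) ^ 2)
    (x : Ω → Fin N → ℝ) (U : Ω → Fin N → ℝ) (δ PE : ℝ)
    (hδ : 0 < δ)
    (hxmeas : Measurable x) (hUmeas : Measurable U)
    (hUval : ∀ ω n, U ω n = 1 ∨ U ω n = -1)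
    (hfint : Integrable (fun ω => f (x ω)) μ)
    (hfint' : Integrable (fun ω => f (fun n => x ω n - δ * U ω n)) μ)
    (hgint : Integrable (fun ω => ∑ n, |G (x ω) n|) μ)
    (herr : ∀ n : Fin N,
      μ[Set.indicator {ω | Real.sign (G (x ω) n) ≠ U ω n} (fun _ => (1:ℝ)) |
          MeasurableSpace.comap x inferInstance] ≤ᵐ[μ] fun _ => PE) :
    μ[fun ω => f (fun n => x ω n - δ * U ω n) - f (x ω) |
        MeasurableSpace.comap x inferInstance] ≤ᵐ[μ]
      fun ω => -δ * (1 - 2 * PE) * ∑ n, |G (x ω) n| + δ ^ 2 / 2 * ∑ n, L n := by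
  have hG : ∀ n, Measurable fun v => G v n := IsCoordwiseSmooth.measurable_apply hsmooth
  have hGx : ∀ n, Measurable fun ω => G (x ω) n := fun n => (hG n).comp hxmeas
  have hcomap : ∀ {g : (Fin N → ℝ) → ℝ}, Measurable g →
      StronglyMeasurable[MeasurableSpace.comap x inferInstance] fun ω => g (x ω) :=
    fun hg => (hg.comp (comap_measurable x)).stronglyMeasurable
  have hGi : ∀ n, Integrable (fun ω => |G (x ω) n|) μ := fun n =>
    hgint.mono (hGx n).abs.aestronglyMeasurable (ae_of_all _ fun ω => by
      simpa [abs_of_nonneg (Finset.sum_nonneg fun j _ => abs_nonneg (G (x ω) j))] using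
        Finset.single_le_sum (f := fun j => |G (x ω) j|) (fun j _ => abs_nonneg _)
          (Finset.mem_univ n))
  have hA : ∀ n, MeasurableSet {ω | Real.sign (G (x ω) n) ≠ U ω n} := fun n =>
    (measurableSet_eq_fun (measurable_real_sign.comp (hGx n))
      ((measurable_pi_apply n).comp hUmeas)).compl
  refine (condExp_le_of_le_add_sum_indicator hxmeas.comap_le
    (ψ := fun ω => -δ * ∑ n, |G (x ω) n| + δ ^ 2 / 2 * ∑ n, L n)
    (φ := fun n ω => 2 * δ * |G (x ω) n|) (hfint'.sub hfint)
    (hcomap (((Finset.measurable_sum _ fun n _ => (hG n).abs).const_mul _).add_const _))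
    ((hgint.const_mul _).add (integrable_const _)) (fun n => hcomap ((hG n).abs.const_mul _))
    (fun n => (hGi n).const_mul _) (fun n ω => by positivity) hA herr fun ω => ?_).trans
    (ae_of_all _ fun ω => le_of_eq ?_)
  · simpa [Set.indicator_apply] using
      IsCoordwiseSmooth.sub_le_of_sign_step hsmooth (x ω) (U ω) (hUval ω) hδ.le
  · simp only [← Finset.mul_sum]
    ring

/-- Conditional expected descent inequality for the sign update
    `x' = x - δ·Û` when each coordinate's sign is decoded wrongly with
    conditional probability at most `P_E < 1/2` given `x`. -/
theorem sign_descent_conditional {Ω : Type*} [MeasurableSpace Ω]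
    (μ : Measure Ω) [IsProbabilityMeasure μ] (N : ℕ)
    (f : (Fin N → ℝ) → ℝ) (G : (Fin N → ℝ) → (Fin N → ℝ))
    (L : Fin N → ℝ) (hL : ∀ n, 0 ≤ L n)
    (hsmooth : ∀ x y : Fin N → ℝ,
      |f y - f x - ∑ n, G x n * (y n - x n)| ≤ ∑ n, L n / 2 * (y n - x n) ^ 2)
    (x : Ω → Fin N → ℝ) (U : Ω → Fin N → ℝ) (δ PE : ℝ)
    (hδ : 0 < δ) (hPE : PE < 1/2)
    (hxmeas : Measurable x) (hUmeas : Measurable U)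
    (hUval : ∀ ω n, U ω n = 1 ∨ U ω n = -1)
    (hfint : Integrable (fun ω => f (x ω)) μ)
    (hfint' : Integrable (fun ω => f (fun n => x ω n - δ * U ω n)) μ)
    (hgint : Integrable (fun ω => ∑ n, |G (x ω) n|) μ)
    (herr : ∀ n : Fin N,
      μ[Set.indicator {ω | Real.sign (G (x ω) n) ≠ U ω n} (fun _ => (1:ℝ)) |
          MeasurableSpace.comap x inferInstance] ≤ᵐ[μ] fun _ => PE) :
    μ[fun ω => f (fun n => x ω n - δ * U ω n) - f (x ω) |
        MeasurableSpace.comap x inferInstance] ≤ᵐ[μ]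
      fun ω => -δ * (1 - 2 * PE) * ∑ n, |G (x ω) n| + δ ^ 2 / 2 * ∑ n, L n :=
  sign_descent_conditional_general μ N f G L hsmooth x U δ PE hδ hxmeas hUmeas hUval hfint hfint'
    hgint herr
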